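/- For every integer p ≥ 3, the polynomial Ṗ(α) := 1/2 + (1/π)·Σ_{n=0}^{p} ((2n)!/(2^{2n}(n!)²(2n+1)))·α^{2n+1} is √p-Lipschitz near [-1,1]: for all α ∈ [-1,1] and α' with |α-α'| ≤ 1/(6p), |Ṗ(α) - Ṗ(α')| ≤ √p · |α - α'|. -/

import Mathlib

open Real Finset

lemma cb_ratio_sq (n : ℕ) : ((Nat.centralBinom n : ℝ) / 4 ^ n) ^ 2 * (3 * n + 1) ≤ 1 := by
  induction n with
  | zero => simp [Nat.centralBinom]
  | succ n ih =>
    have hrec : ((n : ℝ) + 1) * Nat.centralBinom (n + 1) = 2 * (2 * n + 1) * Nat.centralBinom n := by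
      exact_mod_cast Nat.succ_mul_centralBinom_succ n
    have key : ((Nat.centralBinom (n+1) : ℝ) / 4 ^ (n+1)) =
        ((Nat.centralBinom n : ℝ) / 4 ^ n) * ((2 * n + 1) / (2 * (n + 1))) := by
      have hn1 : ((n:ℝ) + 1) ≠ 0 := by positivity
      have h4 : ((4:ℝ) ^ n) ≠ 0 := by positivity
      field_simp
      linear_combination (2 * (4:ℝ)^n) * hrec
    rw [key, mul_pow]
    have hq : (((2 * n + 1) / (2 * (n + 1)) : ℝ))^2 * (3 * ((n:ℝ)+1) + 1) ≤ 3 * n + 1 := by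
      rw [div_pow, div_mul_eq_mul_div, div_le_iff₀ (by positivity)]
      nlinarith [sq_nonneg ((n:ℝ))]
    have hnn : (0:ℝ) ≤ ((Nat.centralBinom n : ℝ) / 4 ^ n) ^ 2 := by positivity
    push_cast
    nlinarith [mul_le_mul_of_nonneg_left hq hnn, ih]

lemma cb_ratio_le (n : ℕ) : ((Nat.centralBinom n : ℝ) / 4 ^ n) ≤ 1 / Real.sqrt (3 * n + 1) := by
  have h1 : (0:ℝ) < 3 * (n:ℝ) + 1 := by positivity
  rw [one_div, ← Real.sqrt_inv, Real.le_sqrt (by positivity), inv_eq_one_div,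
    le_div_iff₀ h1]
  exact cb_ratio_sq n
  positivity

lemma sum_invsqrt_le (p : ℕ) :
    ∑ n ∈ range (p + 1), 1 / Real.sqrt (3 * n + 1) ≤ 2 / 3 * Real.sqrt (3 * p + 1) + 1 / 3 := by
  induction p with
  | zero => norm_num [Real.sqrt_one]
  | succ p ih =>
    rw [Finset.sum_range_succ]
    have h1 : (0:ℝ) < 3 * (p:ℝ) + 1 := by positivity
    have h4 : (0:ℝ) < 3 * ((p:ℝ)+1) + 1 := by positivity
    have hs1 : Real.sqrt (3 * p + 1) ≤ Real.sqrt (3 * ((p:ℝ)+1) + 1) :=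
      Real.sqrt_le_sqrt (by linarith)
    have hs4 : (0:ℝ) < Real.sqrt (3 * ((p:ℝ)+1) + 1) := Real.sqrt_pos.2 h4
    have key : 1 / Real.sqrt (3 * ((p:ℝ)+1) + 1) ≤
        2 / 3 * (Real.sqrt (3 * ((p:ℝ)+1) + 1) - Real.sqrt (3 * p + 1)) := by
      rw [div_le_iff₀ hs4]
      have e1 : Real.sqrt (3 * ((p:ℝ)+1) + 1) * Real.sqrt (3 * ((p:ℝ)+1) + 1) = 3 * ((p:ℝ)+1) + 1 :=
        Real.mul_self_sqrt (le_of_lt h4)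
      have e2 : Real.sqrt (3 * (p:ℝ) + 1) * Real.sqrt (3 * ((p:ℝ)+1) + 1) ≤ 3 * p + 5 / 2 := by
        rw [← Real.sqrt_mul (le_of_lt h1)]
        rw [← Real.sqrt_mul_self (by positivity : (0:ℝ) ≤ 3 * (p:ℝ) + 5/2)]
        apply Real.sqrt_le_sqrt
        nlinarith
      nlinarith
    push_cast
    push_cast at ih
    linarith

lemma pow_diff_bound {x y M : ℝ} (hx : |x| ≤ M) (hy : |y| ≤ M) (k : ℕ) :
    |x ^ k - y ^ k| ≤ k * M ^ (k - 1) * |x - y| := by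
  have hM : 0 ≤ M := le_trans (abs_nonneg x) hx
  rw [← geom_sum₂_mul x y k, abs_mul]
  gcongr
  calc |∑ i ∈ range k, x ^ i * y ^ (k - 1 - i)| ≤ ∑ i ∈ range k, |x ^ i * y ^ (k - 1 - i)| :=
        Finset.abs_sum_le_sum_abs _ _
    _ ≤ ∑ i ∈ range k, M ^ (k - 1) := by
        apply Finset.sum_le_sum
        intro i hi
        rw [abs_mul, abs_pow, abs_pow]
        have hik : i ≤ k - 1 := Nat.le_sub_one_of_lt (Finset.mem_range.1 hi)
        calc |x| ^ i * |y| ^ (k - 1 - i) ≤ M ^ i * M ^ (k - 1 - i) := by gcongr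
          _ = M ^ (k - 1) := by rw [← pow_add]; congr 1; omega
    _ = k * M ^ (k - 1) := by rw [Finset.sum_const, card_range, nsmul_eq_mul]

lemma coeff_eq (n : ℕ) :
    ((Nat.factorial (2 * n) : ℝ) /
        (2 ^ (2 * n) * (Nat.factorial n : ℝ) ^ 2 * (2 * (n : ℝ) + 1))) =
      ((Nat.centralBinom n : ℝ) / 4 ^ n) * (1 / (2 * (n : ℝ) + 1)) := by
  have hfac : ((Nat.factorial (2 * n) : ℝ)) = (Nat.centralBinom n : ℝ) * (Nat.factorial n : ℝ)^2 := by
    have := Nat.choose_mul_factorial_mul_factorial (show n ≤ 2 * n by omega)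
    rw [show 2 * n - n = n by omega] at this
    rw [Nat.centralBinom]
    push_cast [← this]
    ring
  have h2 : ((2:ℝ) ^ (2 * n)) = 4 ^ n := by
    rw [pow_mul]; norm_num
  rw [hfac, h2]
  have hf : ((Nat.factorial n : ℝ)) ≠ 0 := by positivity
  have h21 : (2 * (n:ℝ) + 1) ≠ 0 := by positivity
  field_simp

/-- Degree-(2p+1) truncated Taylor polynomial of the zeroth-order arc-cosine kernel κ₀. -/
noncomputable def PdotTrunc (p : ℕ) (α : ℝ) : ℝ :=
  1 / 2 + (1 / Real.pi) * ∑ n ∈ Finset.range (p + 1),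
    ((Nat.factorial (2 * n) : ℝ) /
        (2 ^ (2 * n) * (Nat.factorial n : ℝ) ^ 2 * (2 * (n : ℝ) + 1))) *
      α ^ (2 * n + 1)

/-- the truncated polynomial of κ₀ is √p-Lipschitz near [-1,1]. -/
theorem PdotTrunc_lipschitz (p : ℕ) (hp : 3 ≤ p) :
    ∀ α ∈ Set.Icc (-1 : ℝ) 1, ∀ α' : ℝ,
      |α - α'| ≤ 1 / (6 * (p : ℝ)) →
        |PdotTrunc p α - PdotTrunc p α'| ≤ Real.sqrt p * |α - α'| := by
  intro α hα α' hd
  have hp0 : (0:ℝ) < p := by exact_mod_cast Nat.lt_of_lt_of_le (by norm_num) hp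
  set M : ℝ := 1 + 1 / (6 * (p:ℝ)) with hMdef
  set δ : ℝ := |α - α'| with hδ
  have hδ0 : 0 ≤ δ := abs_nonneg _
  have hM1 : (1:ℝ) ≤ M := by
    rw [hMdef]
    have : (0:ℝ) ≤ 1 / (6 * (p:ℝ)) := by positivity
    linarith
  have hM0 : (0:ℝ) ≤ M := by linarith
  have hαM : |α| ≤ M := by
    rw [abs_le]; obtain ⟨h1, h2⟩ := hα
    constructor <;> nlinarith [hM1]
  have hα'M : |α'| ≤ M := by
    have : |α'| ≤ |α| + |α' - α| := by
      calc |α'| = |α + (α' - α)| := by ring_nf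
        _ ≤ |α| + |α' - α| := abs_add_le _ _
    rw [abs_sub_comm] at this
    have hα1 : |α| ≤ 1 := abs_le.2 hα
    calc |α'| ≤ |α| + δ := this
      _ ≤ 1 + 1 / (6 * (p:ℝ)) := by linarith [hd]
      _ = M := rfl
  -- difference formula
  have hdiff : PdotTrunc p α - PdotTrunc p α' =
      (1 / Real.pi) * ∑ n ∈ range (p + 1),
        (((Nat.centralBinom n : ℝ) / 4 ^ n) * (1 / (2 * (n : ℝ) + 1))) *
          (α ^ (2 * n + 1) - α' ^ (2 * n + 1)) := by
    simp only [PdotTrunc, coeff_eq]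
    simp only [mul_sub]
    rw [Finset.sum_sub_distrib]
    ring
  -- per-term bound
  have hterm : ∀ n ∈ range (p + 1),
      |(((Nat.centralBinom n : ℝ) / 4 ^ n) * (1 / (2 * (n : ℝ) + 1))) *
          (α ^ (2 * n + 1) - α' ^ (2 * n + 1))| ≤
        (1 / Real.sqrt (3 * n + 1)) * (M ^ (2 * p) * δ) := by
    intro n hn
    have hn' : n ≤ p := by have := Finset.mem_range.1 hn; omega
    have hc0 : (0:ℝ) ≤ ((Nat.centralBinom n : ℝ) / 4 ^ n) * (1 / (2 * (n : ℝ) + 1)) := by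
      positivity
    rw [abs_mul, abs_of_nonneg hc0]
    have hpd := pow_diff_bound hαM hα'M (2 * n + 1)
    rw [show 2 * n + 1 - 1 = 2 * n from rfl] at hpd
    have hMn : M ^ (2 * n) ≤ M ^ (2 * p) := pow_le_pow_right₀ hM1 (by omega)
    calc ((Nat.centralBinom n : ℝ) / 4 ^ n) * (1 / (2 * (n : ℝ) + 1)) *
          |α ^ (2 * n + 1) - α' ^ (2 * n + 1)|
        ≤ ((Nat.centralBinom n : ℝ) / 4 ^ n) * (1 / (2 * (n : ℝ) + 1)) *
          ((2 * n + 1) * M ^ (2 * n) * δ) := by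
          apply mul_le_mul_of_nonneg_left _ hc0
          push_cast at hpd ⊢
          exact hpd
      _ = ((Nat.centralBinom n : ℝ) / 4 ^ n) * (M ^ (2 * n) * δ) := by
          field_simp
      _ ≤ (1 / Real.sqrt (3 * n + 1)) * (M ^ (2 * p) * δ) := by
          apply mul_le_mul (cb_ratio_le n)
          · apply mul_le_mul_of_nonneg_right hMn hδ0
          · positivity
          · positivity
  -- sum bound
  have hsum : |∑ n ∈ range (p + 1),
      (((Nat.centralBinom n : ℝ) / 4 ^ n) * (1 / (2 * (n : ℝ) + 1))) *
        (α ^ (2 * n + 1) - α' ^ (2 * n + 1))| ≤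
      (2 / 3 * Real.sqrt (3 * p + 1) + 1 / 3) * (M ^ (2 * p) * δ) := by
    calc |∑ n ∈ range (p + 1), _| ≤ ∑ n ∈ range (p + 1),
          |(((Nat.centralBinom n : ℝ) / 4 ^ n) * (1 / (2 * (n : ℝ) + 1))) *
            (α ^ (2 * n + 1) - α' ^ (2 * n + 1))| := Finset.abs_sum_le_sum_abs _ _
      _ ≤ ∑ n ∈ range (p + 1), (1 / Real.sqrt (3 * n + 1)) * (M ^ (2 * p) * δ) :=
          Finset.sum_le_sum hterm
      _ = (∑ n ∈ range (p + 1), 1 / Real.sqrt (3 * n + 1)) * (M ^ (2 * p) * δ) := by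
          rw [← Finset.sum_mul]
      _ ≤ (2 / 3 * Real.sqrt (3 * p + 1) + 1 / 3) * (M ^ (2 * p) * δ) := by
          apply mul_le_mul_of_nonneg_right (sum_invsqrt_le p)
          positivity
  -- M ^ (2p) ≤ exp (1/3) ≤ 1.4
  have hexp : M ^ (2 * p) ≤ Real.exp (1 / 3) := by
    have h1 : M ≤ Real.exp (1 / (6 * (p:ℝ))) := by
      have := Real.add_one_le_exp (1 / (6 * (p:ℝ)))
      linarith
    calc M ^ (2 * p) ≤ Real.exp (1 / (6 * (p:ℝ))) ^ (2 * p) := by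
          exact pow_le_pow_left₀ hM0 h1 _
      _ = Real.exp ((2 * p : ℕ) * (1 / (6 * (p:ℝ)))) := by
          rw [Real.exp_nat_mul]
      _ = Real.exp (1 / 3) := by
          congr 1
          push_cast
          field_simp
          ring
  have hexp14 : Real.exp (1 / 3) ≤ 1.4 := by
    have h1 : Real.exp (1 / 3) ^ 3 = Real.exp 1 := by
      rw [← Real.exp_nat_mul]; norm_num
    have h2 : Real.exp 1 < 2.7182818286 := Real.exp_one_lt_d9
    have h3 : Real.exp (1 / 3) ^ 3 < (1.4:ℝ) ^ 3 := by
      rw [h1]; norm_num; linarith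
    exact le_of_lt (lt_of_pow_lt_pow_left₀ 3 (by norm_num) h3)
  have hMp : M ^ (2 * p) ≤ 1.4 := le_trans hexp hexp14
  have hMpnn : (0:ℝ) ≤ M ^ (2 * p) := by positivity
  -- sqrt bounds
  have hsq1 : (1:ℝ) ≤ Real.sqrt p := by
    rw [show (1:ℝ) = Real.sqrt 1 from (Real.sqrt_one).symm]
    exact Real.sqrt_le_sqrt (by exact_mod_cast Nat.one_le_iff_ne_zero.2 (by omega))
  have hsq2 : Real.sqrt (3 * p + 1) ≤ 2 * Real.sqrt p := by
    rw [show (2:ℝ) * Real.sqrt p = Real.sqrt (4 * p) by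
      rw [show (4:ℝ) = 2^2 by norm_num, Real.sqrt_mul (by positivity), Real.sqrt_sq (by norm_num)]]
    apply Real.sqrt_le_sqrt
    have : (3:ℝ) ≤ p := by exact_mod_cast hp
    linarith
  -- final numeric
  rw [hdiff, abs_mul, abs_of_nonneg (by positivity : (0:ℝ) ≤ 1 / Real.pi)]
  have hpi : (3.141592:ℝ) < Real.pi := by
    have := Real.pi_gt_d6
    linarith
  have hchain : (1 / Real.pi) * ((2 / 3 * Real.sqrt (3 * p + 1) + 1 / 3) * (M ^ (2 * p) * δ)) ≤
      Real.sqrt p * δ := by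
    have hS : (2 / 3 * Real.sqrt (3 * p + 1) + 1 / 3) ≤ 4 / 3 * Real.sqrt p + 1 / 3 := by
      linarith
    have hSnn : (0:ℝ) ≤ 2 / 3 * Real.sqrt (3 * p + 1) + 1 / 3 := by positivity
    have hstep : (2 / 3 * Real.sqrt (3 * p + 1) + 1 / 3) * (M ^ (2 * p) * δ) ≤
        (4 / 3 * Real.sqrt p + 1 / 3) * (1.4 * δ) := by
      apply mul_le_mul hS _ (by positivity) (by positivity)
      exact mul_le_mul_of_nonneg_right hMp hδ0
    rw [div_mul_eq_mul_div, one_mul, div_le_iff₀ (by positivity : (0:ℝ) < Real.pi)]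
    calc (2 / 3 * Real.sqrt (3 * p + 1) + 1 / 3) * (M ^ (2 * p) * δ)
        ≤ (4 / 3 * Real.sqrt p + 1 / 3) * (1.4 * δ) := hstep
      _ ≤ Real.sqrt p * δ * Real.pi := by nlinarith [hsq1, hδ0, hpi, mul_le_mul_of_nonneg_left (le_of_lt hpi) (mul_nonneg (le_trans zero_le_one hsq1) hδ0)]
  calc (1 / Real.pi) * |∑ n ∈ range (p + 1),
        (((Nat.centralBinom n : ℝ) / 4 ^ n) * (1 / (2 * (n : ℝ) + 1))) *
          (α ^ (2 * n + 1) - α' ^ (2 * n + 1))|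
      ≤ (1 / Real.pi) * ((2 / 3 * Real.sqrt (3 * p + 1) + 1 / 3) * (M ^ (2 * p) * δ)) := by
        apply mul_le_mul_of_nonneg_left hsum (by positivity)
    _ ≤ Real.sqrt p * δ := hchain
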